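/- arXiv:2605.12136 — 2 statements merged into one kernel-verified Lean document; each statement's English description precedes it below -/
import Mathlib

section
/- Let J be a positive integer and let K ⊆ ℝ^J be nonempty, closed, and convex. Suppose A_n are symmetric positive definite J×J real matrices converging entrywise to a symmetric positive definite matrix A, and x_n → x in ℝ^J. Then Π_{K,A_n} x_n → Π_{K,A} x, where Π_{K,B} z denotes the unique minimizer of (z − λ)ᵀB(z − λ) over λ ∈ K. -/
open Matrix Filter Topology Metric

/-!
Write `Q_B(v) = vᵀBv`. If `q` minimizes `Q_B(y - ·)` over a convex set, comparing with the
midpoint of `q` and any `l` in the set gives `Q_B(l - q) ≤ 2 (Q_B(y - l) - Q_B(y - q))`.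
Applied to `Aₙ, xₙ` with `l = q`, and using that `A` is positive definite so that the `Aₙ` are
eventually uniformly coercive, this keeps the `pₙ` in a fixed compact ball. Applied to `A, x`
with `l = pₙ`, it bounds `μ ‖pₙ - q‖²` by `Q_A(x - pₙ) - Q_{Aₙ}(xₙ - pₙ)` plus
`Q_{Aₙ}(xₙ - q) - Q_A(x - q)`, and both tend to `0` because `(B, y, l) ↦ Q_B(y - l)` is
continuous, hence uniformly so in `(B, y)` for `l` in a compact set.
-/

section QuadraticForm

variable {n : Type*} [Fintype n]

theorem dotProduct_mulVec_sub_add_dotProduct_mulVec_sub (B : Matrix n n ℝ) (y q l : n → ℝ) :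
    (y - q) ⬝ᵥ B *ᵥ (y - q) + (y - l) ⬝ᵥ B *ᵥ (y - l) =
      2 * ((y - ((1 / 2 : ℝ) • q + (1 / 2 : ℝ) • l)) ⬝ᵥ
          B *ᵥ (y - ((1 / 2 : ℝ) • q + (1 / 2 : ℝ) • l)))
        + (1 / 2) * ((l - q) ⬝ᵥ B *ᵥ (l - q)) := by
  simp only [mulVec_sub, mulVec_add, mulVec_smul, dotProduct_sub, dotProduct_add,
    dotProduct_smul, sub_dotProduct, add_dotProduct, smul_dotProduct, smul_eq_mul]
  ring

theorem Convex.dotProduct_mulVec_sub_le_of_isMinOn {K : Set (n → ℝ)} (hK : Convex ℝ K)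
    (B : Matrix n n ℝ) {y q l : n → ℝ} (hq : q ∈ K)
    (hmin : IsMinOn (fun l => (y - l) ⬝ᵥ B *ᵥ (y - l)) K q) (hl : l ∈ K) :
    (l - q) ⬝ᵥ B *ᵥ (l - q) ≤ 2 * ((y - l) ⬝ᵥ B *ᵥ (y - l) - (y - q) ⬝ᵥ B *ᵥ (y - q)) := by
  have hmid := isMinOn_iff.1 hmin _
    (hK hq hl (by norm_num : (0 : ℝ) ≤ 1 / 2) (by norm_num : (0 : ℝ) ≤ 1 / 2) (by norm_num))
  linarith [dotProduct_mulVec_sub_add_dotProduct_mulVec_sub B y q l]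

theorem mul_sq_norm_le_dotProduct_mulVec_of_mem_sphere {B : Matrix n n ℝ} {μ : ℝ}
    (h : ∀ u ∈ sphere (0 : n → ℝ) 1, μ ≤ u ⬝ᵥ B *ᵥ u) (v : n → ℝ) :
    μ * ‖v‖ ^ 2 ≤ v ⬝ᵥ B *ᵥ v := by
  rcases eq_or_ne v 0 with rfl | hv
  · simp
  have hnorm : 0 < ‖v‖ := norm_pos_iff.2 hv
  have hu : ‖v‖⁻¹ • v ∈ sphere (0 : n → ℝ) 1 := by
    rw [mem_sphere_zero_iff_norm, norm_smul, norm_inv, norm_norm, inv_mul_cancel₀ hnorm.ne']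
  have hscale : (‖v‖⁻¹ • v) ⬝ᵥ B *ᵥ (‖v‖⁻¹ • v) = (v ⬝ᵥ B *ᵥ v) / ‖v‖ ^ 2 := by
    simp only [mulVec_smul, dotProduct_smul, smul_dotProduct, smul_eq_mul]
    field_simp
  have := h _ hu
  rwa [hscale, le_div_iff₀ (by positivity)] at this

theorem continuous_dotProduct_mulVec :
    Continuous fun z : Matrix n n ℝ × (n → ℝ) => z.2 ⬝ᵥ z.1 *ᵥ z.2 := by
  fun_prop

theorem Matrix.PosDef.eventually_coercive {B : Matrix n n ℝ} (hB : B.PosDef) :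
    ∃ μ > 0, ∀ᶠ B' in 𝓝 B, ∀ v : n → ℝ, μ * ‖v‖ ^ 2 ≤ v ⬝ᵥ B' *ᵥ v := by
  obtain ⟨μ, hμ, hμB⟩ := (isCompact_sphere (0 : n → ℝ) 1).exists_forall_le'
    (continuous_dotProduct_mulVec.comp (continuous_const.prodMk continuous_id)).continuousOn
    fun u hu => by simpa using hB.dotProduct_mulVec_pos (ne_zero_of_mem_unit_sphere ⟨u, hu⟩)
  refine ⟨μ / 2, half_pos hμ, ?_⟩
  have hnear : ∀ᶠ B' in 𝓝 B, ∀ u ∈ sphere (0 : n → ℝ) 1, μ / 2 < u ⬝ᵥ B' *ᵥ u :=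
    (isCompact_sphere 0 1).eventually_forall_of_forall_eventually fun u hu =>
      continuousAt_const.eventually_lt continuous_dotProduct_mulVec.continuousAt
        ((half_lt_self hμ).trans_le (hμB u hu))
  exact hnear.mono fun B' hB' =>
    mul_sq_norm_le_dotProduct_mulVec_of_mem_sphere fun u hu => (hB' u hu).le

end QuadraticForm

theorem tendsto_sub_of_continuous_of_isCompact {X Y E ι : Type*} [TopologicalSpace X]
    [TopologicalSpace Y] [SeminormedAddCommGroup E] {F : X → Y → E} (hF : Continuous ↿F)
    {S : Set Y} (hS : IsCompact S) {l : Filter ι} {a : ι → X} {a₀ : X}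
    (ha : Tendsto a l (𝓝 a₀)) {v : ι → Y} (hv : ∀ᶠ i in l, v i ∈ S) :
    Tendsto (fun i => F (a i) (v i) - F a₀ (v i)) l (𝓝 0) := by
  rw [Metric.tendsto_nhds]
  intro ε hε
  have hdiff : Continuous fun z : X × Y => F z.1 z.2 - F a₀ z.2 :=
    hF.sub (hF.comp (continuous_const.prodMk continuous_snd))
  have hunif : ∀ᶠ x in 𝓝 a₀, ∀ y ∈ S, dist (F x y - F a₀ y) 0 < ε :=
    hS.eventually_forall_of_forall_eventually fun y _ =>
      Metric.tendsto_nhds.1 (by simpa using hdiff.tendsto (a₀, y)) ε hε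
  filter_upwards [ha.eventually hunif, hv] with i hi hvi using hi _ hvi

theorem metric_projection_jointly_continuous_general
    (J : ℕ)
    (K : Set (Fin J → ℝ))
    (hKconv : Convex ℝ K)
    (A : ℕ → Matrix (Fin J) (Fin J) ℝ)
    (Alim : Matrix (Fin J) (Fin J) ℝ)
    (hAlimpd : Alim.PosDef)
    (hAconv : ∀ i j, Tendsto (fun n => A n i j) atTop (𝓝 (Alim i j)))
    (x : ℕ → Fin J → ℝ) (xlim : Fin J → ℝ)
    (hx : Tendsto x atTop (𝓝 xlim))
    (p : ℕ → Fin J → ℝ)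
    (hp : ∀ n, p n ∈ K ∧
      ∀ l ∈ K, (x n - p n) ⬝ᵥ (A n).mulVec (x n - p n)
                ≤ (x n - l) ⬝ᵥ (A n).mulVec (x n - l))
    (q : Fin J → ℝ)
    (hq : q ∈ K ∧
      ∀ l ∈ K, (xlim - q) ⬝ᵥ Alim.mulVec (xlim - q)
                ≤ (xlim - l) ⬝ᵥ Alim.mulVec (xlim - l)) :
    Tendsto p atTop (𝓝 q) := by
  obtain ⟨μ, hμ, hcoer⟩ := hAlimpd.eventually_coercive
  let F : Matrix (Fin J) (Fin J) ℝ × (Fin J → ℝ) → (Fin J → ℝ) → ℝ :=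
    fun z l => (z.2 - l) ⬝ᵥ z.1 *ᵥ (z.2 - l)
  have hF : Continuous ↿F := by
    simp only [F]
    fun_prop
  have hA : Tendsto A atTop (𝓝 Alim) := tendsto_pi_nhds.2 fun i => tendsto_pi_nhds.2 (hAconv i)
  have hAx : Tendsto (fun n => (A n, x n)) atTop (𝓝 (Alim, xlim)) := hA.prodMk_nhds hx
  have hFq : Tendsto (fun n => F (A n, x n) q) atTop (𝓝 (F (Alim, xlim) q)) :=
    (hF.comp (continuous_id.prodMk continuous_const)).tendsto _ |>.comp hAx
  set C := F (Alim, xlim) q + 1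
  have hbdd : ∀ᶠ n in atTop, p n ∈ closedBall q √(2 * C / μ) := by
    filter_upwards [hA.eventually hcoer, hFq.eventually_lt_const (lt_add_one _)]
      with n hcoer_n hFq_n
    have hgap := hKconv.dotProduct_mulVec_sub_le_of_isMinOn (A n) (hp n).1
      (isMinOn_iff.2 (hp n).2) hq.1
    have hpos := (mul_nonneg hμ.le (sq_nonneg _)).trans (hcoer_n (x n - p n))
    rw [mem_closedBall, dist_eq_norm, norm_sub_rev]
    refine Real.le_sqrt_of_sq_le ((le_div_iff₀ hμ).2 ?_)
    linarith [hcoer_n (q - p n)]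
  have herr := tendsto_sub_of_continuous_of_isCompact hF (isCompact_closedBall _ _) hAx hbdd
  have hsq : Tendsto (fun n => μ * ‖p n - q‖ ^ 2) atTop (𝓝 0) := by
    refine squeeze_zero (fun n => by positivity) (fun n => ?_)
      (by simpa using (herr.neg.add (hFq.sub_const (F (Alim, xlim) q))).const_mul 2)
    have hgap := hKconv.dotProduct_mulVec_sub_le_of_isMinOn Alim hq.1
      (isMinOn_iff.2 hq.2) (hp n).1
    linarith [hcoer.self_of_nhds (p n - q), (hp n).2 q hq.1]
  rw [tendsto_iff_norm_sub_tendsto_zero]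
  simpa [hμ.ne'] using (hsq.const_mul μ⁻¹).sqrt

/-- Joint continuity of the `A`-metric projection onto a nonempty closed convex
set `K`: if symmetric positive definite matrices `Aₙ` converge entrywise to a
symmetric positive definite `A` and `xₙ → x`, then the (unique) minimizers
`pₙ` of `(xₙ − λ)ᵀAₙ(xₙ − λ)` over `K` converge to the (unique) minimizer `q`
of `(x − λ)ᵀA(x − λ)` over `K`. -/
theorem metric_projection_jointly_continuous
    (J : ℕ) (hJ : 0 < J)
    (K : Set (Fin J → ℝ))
    (hKne : K.Nonempty) (hKcl : IsClosed K) (hKconv : Convex ℝ K)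
    (A : ℕ → Matrix (Fin J) (Fin J) ℝ)
    (Alim : Matrix (Fin J) (Fin J) ℝ)
    (hAsymm : ∀ n, (A n).IsSymm) (hApd : ∀ n, (A n).PosDef)
    (hAlimsymm : Alim.IsSymm) (hAlimpd : Alim.PosDef)
    (hAconv : ∀ i j, Tendsto (fun n => A n i j) atTop (𝓝 (Alim i j)))
    (x : ℕ → Fin J → ℝ) (xlim : Fin J → ℝ)
    (hx : Tendsto x atTop (𝓝 xlim))
    (p : ℕ → Fin J → ℝ)
    (hp : ∀ n, p n ∈ K ∧
      ∀ l ∈ K, (x n - p n) ⬝ᵥ (A n).mulVec (x n - p n)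
                ≤ (x n - l) ⬝ᵥ (A n).mulVec (x n - l))
    (q : Fin J → ℝ)
    (hq : q ∈ K ∧
      ∀ l ∈ K, (xlim - q) ⬝ᵥ Alim.mulVec (xlim - q)
                ≤ (xlim - l) ⬝ᵥ Alim.mulVec (xlim - l)) :
    Tendsto p atTop (𝓝 q) :=
  metric_projection_jointly_continuous_general J K hKconv A Alim hAlimpd hAconv x xlim hx p hp q hq
end

section
/- Let J be a positive integer, let H ⊆ ℝ^J be nonempty, closed, and convex, let w₀ ∈ H, and let A be a symmetric positive definite J×J real matrix. Let T_{H,w₀} denote the closure of {λ(h − w₀) : h ∈ H, λ ≥ 0}. Then for every x ∈ ℝ^J, (Π_{H,A}(w₀ + t x) − w₀)/t → Π_{T_{H,w₀},A} x as t → 0⁺, where Π_{K,A} z denotes the unique minimizer of (z − λ)ᵀA(z − λ) over λ ∈ K (for K nonempty closed convex). -/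
open Matrix Filter Topology

/-!
Write `Q u = uᵀ A u`. Scaling by `t⁻¹` turns the projection of `w₀ + t • x` onto `H` into the
projection of `x` onto `t⁻¹ • (H - w₀)`; these sets increase to the cone of feasible directions
of `H` at `w₀`, whose closure is `T`. So the optimal values `Q (x - dₜ)` of the difference
quotients `dₜ` converge to the optimal value over `T`, and strong convexity of `l ↦ Q (x - l)`
(the parallelogram law) turns convergence of the values into convergence of the minimizers.
-/

namespace QuadraticMap

variable {R M : Type*} [CommRing R] [AddCommGroup M] [Module R M]

theorem map_add_add_map_sub (Q : QuadraticForm R M) (a b : M) :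
    Q (a + b) + Q (a - b) = 2 * Q a + 2 * Q b := by
  obtain ⟨B, hB⟩ := Q.exists_companion
  rw [sub_eq_add_neg, hB, hB, Q.map_neg, LinearMap.map_neg]
  ring

end QuadraticMap

section Module

variable {E : Type*} [AddCommGroup E] [Module ℝ E]

def feasibleCone (H : Set E) (w₀ : E) : Set E :=
  {v | ∃ h ∈ H, ∃ c : ℝ, 0 ≤ c ∧ v = c • (h - w₀)}

theorem convex_feasibleCone {H : Set E} (hH : Convex ℝ H) {w₀ : E} (hw₀ : w₀ ∈ H) :
    Convex ℝ (feasibleCone H w₀) := by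
  have hs : Convex ℝ ((w₀ + ·) ⁻¹' H) := hH.translate_preimage_right w₀
  suffices feasibleCone H w₀ = ConvexCone.hull ℝ ((w₀ + ·) ⁻¹' H) from
    this ▸ ConvexCone.convex _
  ext v
  rw [SetLike.mem_coe, ConvexCone.mem_hull_of_convex hs]
  constructor
  · rintro ⟨h, hh, c, hc, rfl⟩
    rcases hc.eq_or_lt with rfl | hc
    · exact ⟨1, one_pos, by simpa using Set.zero_mem_smul_set (by simpa using hw₀)⟩
    · exact ⟨c, hc, Set.smul_mem_smul_set (by simpa using hh)⟩
  · rintro ⟨c, hc, y, hy, rfl⟩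
    exact ⟨_, hy, c, hc.le, by simp⟩

theorem Convex.eventually_add_smul_mem_of_mem_feasibleCone {H : Set E} (hH : Convex ℝ H)
    {w₀ v : E} (hw₀ : w₀ ∈ H) (hv : v ∈ feasibleCone H w₀) :
    ∀ᶠ t in 𝓝[>] (0 : ℝ), w₀ + t • v ∈ H := by
  obtain ⟨h, hh, c, hc, rfl⟩ := hv
  have hsmall : ∀ᶠ t in 𝓝[>] (0 : ℝ), t * c < 1 := by
    have : Tendsto (fun t : ℝ => t * c) (𝓝 0) (𝓝 0) := by
      simpa using (continuous_mul_const c).tendsto 0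
    exact (this.mono_left nhdsWithin_le_nhds).eventually (gt_mem_nhds one_pos)
  filter_upwards [hsmall, self_mem_nhdsWithin] with t htc ht
  rw [smul_smul]
  exact hH.add_smul_sub_mem hw₀ hh ⟨mul_nonneg ht.le hc, htc.le⟩

theorem QuadraticMap.map_sub_le_of_isMinOn (Q : QuadraticForm ℝ E) {K : Set E}
    (hK : Convex ℝ K) {x p u : E} (hp : p ∈ K) (hmin : IsMinOn (fun l => Q (x - l)) K p)
    (hu : u ∈ K) : Q (u - p) ≤ 2 * (Q (x - u) - Q (x - p)) := by
  have hmid : (2⁻¹ : ℝ) • u + (2⁻¹ : ℝ) • p ∈ K :=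
    hK hu hp (by norm_num) (by norm_num) (by norm_num)
  have hpar := Q.map_add_add_map_sub (x - p) (x - u)
  have hsum : (x - p) + (x - u) = (2 : ℝ) • (x - ((2⁻¹ : ℝ) • u + (2⁻¹ : ℝ) • p)) := by
    module
  rw [hsum, Q.map_smul, show (x - p) - (x - u) = u - p by abel, smul_eq_mul] at hpar
  have := isMinOn_iff.1 hmin _ hmid
  linarith

theorem QuadraticMap.map_sub_inv_smul_sub_le (Q : QuadraticForm ℝ E) {H : Set E}
    {w₀ x v y : E} {t : ℝ} (ht : t ≠ 0) (hy : IsMinOn (fun l => Q (w₀ + t • x - l)) H y)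
    (hv : w₀ + t • v ∈ H) : Q (x - t⁻¹ • (y - w₀)) ≤ Q (x - v) := by
  have hscale : ∀ u, x - t⁻¹ • (u - w₀) = t⁻¹ • (w₀ + t • x - u) := fun u => by
    rw [smul_sub, smul_sub, smul_add, smul_smul, inv_mul_cancel₀ ht, one_smul]; abel
  have hv' : x - v = t⁻¹ • (w₀ + t • x - (w₀ + t • v)) := by
    rw [← hscale, add_sub_cancel_left, smul_smul, inv_mul_cancel₀ ht, one_smul]
  rw [hscale, hv', Q.map_smul, Q.map_smul, smul_eq_mul, smul_eq_mul]
  exact mul_le_mul_of_nonneg_left (isMinOn_iff.1 hy _ hv) (mul_self_nonneg _)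

end Module

theorem tendsto_of_eventually_ge_of_mem_closure {α X : Type*} [TopologicalSpace X]
    {l : Filter α} {f : X → ℝ} {g : α → X} {K : Set X} {p : X} (hf : ContinuousAt f p)
    (hp : p ∈ closure K) (hge : ∀ᶠ a in l, f p ≤ f (g a))
    (hle : ∀ v ∈ K, ∀ᶠ a in l, f (g a) ≤ f v) :
    Tendsto (f ∘ g) l (𝓝 (f p)) := by
  refine tendsto_order.2 ⟨fun b hb => hge.mono fun a ha => hb.trans_le ha, fun b hb => ?_⟩
  obtain ⟨v, hvb, hvK⟩ :=
    mem_closure_iff_nhds.1 hp _ (hf.preimage_mem_nhds (Iio_mem_nhds hb))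
  exact (hle v hvK).mono fun a ha => ha.trans_lt hvb

section Normed

variable {E : Type*} [NormedAddCommGroup E] [NormedSpace ℝ E]

theorem QuadraticMap.PosDef.exists_pos_mul_norm_sq_le [FiniteDimensional ℝ E]
    {Q : QuadraticForm ℝ E} (hQ : Q.PosDef) (hQc : Continuous Q) :
    ∃ c > 0, ∀ u, c * ‖u‖ ^ 2 ≤ Q u := by
  rcases subsingleton_or_nontrivial E with hE | hE
  · exact ⟨1, one_pos, fun u => by simp [Subsingleton.elim u 0]⟩
  obtain ⟨u₀, hu₀, hmin⟩ := (isCompact_sphere (0 : E) 1).exists_isMinOn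
    (NormedSpace.sphere_nonempty.2 zero_le_one) hQc.continuousOn
  have hu₀ne : u₀ ≠ 0 := ne_zero_of_mem_unit_sphere ⟨u₀, hu₀⟩
  refine ⟨Q u₀, hQ u₀ hu₀ne, fun u => ?_⟩
  rcases eq_or_ne u 0 with rfl | hu
  · simp
  have hnorm : ‖u‖ ≠ 0 := norm_ne_zero_iff.2 hu
  have hunit : ‖u‖⁻¹ • u ∈ Metric.sphere (0 : E) 1 := by
    simp [norm_smul, inv_mul_cancel₀ hnorm]
  calc Q u₀ * ‖u‖ ^ 2 ≤ ‖u‖ ^ 2 * Q (‖u‖⁻¹ • u) := by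
        rw [mul_comm]; exact mul_le_mul_of_nonneg_left (isMinOn_iff.1 hmin _ hunit) (sq_nonneg _)
    _ = Q u := by rw [Q.map_smul, smul_eq_mul]; field_simp

theorem QuadraticMap.PosDef.tendsto_of_tendsto_map_sub [FiniteDimensional ℝ E]
    {Q : QuadraticForm ℝ E} (hQ : Q.PosDef) (hQc : Continuous Q) {α : Type*} {l : Filter α}
    {g : α → E} {p : E} (hg : Tendsto (fun a => Q (g a - p)) l (𝓝 0)) :
    Tendsto g l (𝓝 p) := by
  obtain ⟨c, hc, hcQ⟩ := hQ.exists_pos_mul_norm_sq_le hQc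
  rw [tendsto_iff_norm_sub_tendsto_zero]
  refine Metric.tendsto_nhds.2 fun ε hε => ?_
  filter_upwards [(tendsto_order.1 hg).2 (c * ε ^ 2) (by positivity)] with a ha
  have : ‖g a - p‖ ^ 2 < ε ^ 2 := lt_of_mul_lt_mul_left ((hcQ _).trans_lt ha) hc.le
  simpa using abs_lt_of_sq_lt_sq this hε.le

theorem QuadraticMap.PosDef.tendsto_inv_smul_projection_sub [FiniteDimensional ℝ E]
    {Q : QuadraticForm ℝ E} (hQ : Q.PosDef) (hQc : Continuous Q) {H : Set E}
    (hH : Convex ℝ H) {w₀ : E} (hw₀ : w₀ ∈ H) {projH : E → E}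
    (hprojH : ∀ z, projH z ∈ H ∧ IsMinOn (fun l => Q (z - l)) H (projH z)) {x p : E}
    (hp : p ∈ closure (feasibleCone H w₀))
    (hpmin : IsMinOn (fun l => Q (x - l)) (closure (feasibleCone H w₀)) p) :
    Tendsto (fun t : ℝ => t⁻¹ • (projH (w₀ + t • x) - w₀)) (𝓝[>] 0) (𝓝 p) := by
  set d := fun t : ℝ => t⁻¹ • (projH (w₀ + t • x) - w₀)
  have hd : ∀ᶠ t in 𝓝[>] (0 : ℝ), d t ∈ closure (feasibleCone H w₀) :=
    eventually_mem_nhdsWithin.mono fun t ht =>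
      subset_closure ⟨_, (hprojH _).1, t⁻¹, (inv_pos.2 ht).le, rfl⟩
  have hge : ∀ᶠ t in 𝓝[>] (0 : ℝ), Q (x - p) ≤ Q (x - d t) :=
    hd.mono fun t ht => isMinOn_iff.1 hpmin _ ht
  have hvalue : Tendsto (fun t => Q (x - d t)) (𝓝[>] 0) (𝓝 (Q (x - p))) :=
    tendsto_of_eventually_ge_of_mem_closure (f := fun l => Q (x - l))
      (hQc.comp (continuous_const.sub continuous_id)).continuousAt hp hge
      fun v hv => ((hH.eventually_add_smul_mem_of_mem_feasibleCone hw₀ hv).and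
        self_mem_nhdsWithin).mono fun t ⟨htv, ht⟩ =>
          Q.map_sub_inv_smul_sub_le ht.ne' (hprojH _).2 htv
  have hgap : Tendsto (fun t => 2 * (Q (x - d t) - Q (x - p))) (𝓝[>] 0) (𝓝 0) := by
    simpa using (hvalue.sub_const (Q (x - p))).const_mul 2
  refine hQ.tendsto_of_tendsto_map_sub hQc <|
    tendsto_of_tendsto_of_tendsto_of_le_of_le' tendsto_const_nhds hgap ?_ ?_
  · exact Eventually.of_forall fun t => hQ.nonneg _
  · exact hd.mono fun t ht =>
      Q.map_sub_le_of_isMinOn ((convex_feasibleCone hH hw₀).closure) hp hpmin ht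

end Normed

theorem Matrix.toQuadraticForm'_apply {n : Type*} [Fintype n] [DecidableEq n]
    (A : Matrix n n ℝ) (u : n → ℝ) : A.toQuadraticForm' u = u ⬝ᵥ A *ᵥ u := by
  simp [Matrix.toQuadraticForm', toLinearMap₂'_apply']

theorem Matrix.continuous_toQuadraticForm' {n : Type*} [Fintype n] [DecidableEq n]
    (A : Matrix n n ℝ) : Continuous A.toQuadraticForm' := by
  simp only [funext A.toQuadraticForm'_apply]
  exact continuous_id.dotProduct (continuous_const.matrix_mulVec continuous_id)

theorem metric_projection_directionally_differentiable_general
    (J : ℕ)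
    (H : Set (Fin J → ℝ))
    (hHconv : Convex ℝ H)
    (w₀ : Fin J → ℝ) (hw₀ : w₀ ∈ H)
    (A : Matrix (Fin J) (Fin J) ℝ)
    (hApd : A.PosDef)
    (T : Set (Fin J → ℝ))
    (hT : T = closure {v : Fin J → ℝ | ∃ h ∈ H, ∃ c : ℝ, 0 ≤ c ∧ v = c • (h - w₀)})
    (projH : (Fin J → ℝ) → (Fin J → ℝ))
    (hprojH : ∀ z : Fin J → ℝ, projH z ∈ H ∧
      ∀ l ∈ H, (z - projH z) ⬝ᵥ A.mulVec (z - projH z)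
                ≤ (z - l) ⬝ᵥ A.mulVec (z - l))
    (projT : (Fin J → ℝ) → (Fin J → ℝ))
    (hprojT : ∀ z : Fin J → ℝ, projT z ∈ T ∧
      ∀ l ∈ T, (z - projT z) ⬝ᵥ A.mulVec (z - projT z)
                ≤ (z - l) ⬝ᵥ A.mulVec (z - l)) :
    ∀ x : Fin J → ℝ,
      Tendsto (fun t : ℝ => t⁻¹ • (projH (w₀ + t • x) - w₀))
        (𝓝[>] (0 : ℝ)) (𝓝 (projT x)) := by
  intro x
  subst hT
  have hmin : ∀ (K : Set (Fin J → ℝ)) (z y : Fin J → ℝ),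
      (∀ l ∈ K, (z - y) ⬝ᵥ A *ᵥ (z - y) ≤ (z - l) ⬝ᵥ A *ᵥ (z - l)) →
        IsMinOn (fun l => A.toQuadraticForm' (z - l)) K y := fun K z y h => by
    simpa only [isMinOn_iff, A.toQuadraticForm'_apply] using h
  exact hApd.toQuadraticForm'.tendsto_inv_smul_projection_sub A.continuous_toQuadraticForm'
    hHconv hw₀ (fun z => ⟨(hprojH z).1, hmin _ _ _ (hprojH z).2⟩) (hprojT x).1
    (hmin _ _ _ (hprojT x).2)

/-- Directional differentiability of the `A`-metric projection onto a nonempty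
closed convex set `H` at `w₀ ∈ H` (Zarantonello): for every direction `x`,
`(Π_{H,A}(w₀ + t x) − w₀)/t → Π_{T_{H,w₀},A} x` as `t → 0⁺`, where
`T_{H,w₀}` is the closure of `{c(h − w₀) : h ∈ H, c ≥ 0}` and `Π_{K,A} z` is
the unique minimizer of `(z − λ)ᵀA(z − λ)` over `K`, given here via functions
`projH` and `projT` characterized by their minimizing property. -/
theorem metric_projection_directionally_differentiable
    (J : ℕ) (hJ : 0 < J)
    (H : Set (Fin J → ℝ))
    (hHne : H.Nonempty) (hHcl : IsClosed H) (hHconv : Convex ℝ H)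
    (w₀ : Fin J → ℝ) (hw₀ : w₀ ∈ H)
    (A : Matrix (Fin J) (Fin J) ℝ)
    (hAsymm : A.IsSymm) (hApd : A.PosDef)
    (T : Set (Fin J → ℝ))
    (hT : T = closure {v : Fin J → ℝ | ∃ h ∈ H, ∃ c : ℝ, 0 ≤ c ∧ v = c • (h - w₀)})
    (projH : (Fin J → ℝ) → (Fin J → ℝ))
    (hprojH : ∀ z : Fin J → ℝ, projH z ∈ H ∧
      ∀ l ∈ H, (z - projH z) ⬝ᵥ A.mulVec (z - projH z)
                ≤ (z - l) ⬝ᵥ A.mulVec (z - l))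
    (projT : (Fin J → ℝ) → (Fin J → ℝ))
    (hprojT : ∀ z : Fin J → ℝ, projT z ∈ T ∧
      ∀ l ∈ T, (z - projT z) ⬝ᵥ A.mulVec (z - projT z)
                ≤ (z - l) ⬝ᵥ A.mulVec (z - l)) :
    ∀ x : Fin J → ℝ,
      Tendsto (fun t : ℝ => t⁻¹ • (projH (w₀ + t • x) - w₀))
        (𝓝[>] (0 : ℝ)) (𝓝 (projT x)) :=
  metric_projection_directionally_differentiable_general J H hHconv w₀ hw₀ A hApd T hT projH hprojH
    projT hprojT
end
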